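/- Let U ⊆ ℝ^(n+2) be open, (ξ, N) a null frame on U, and Z : U → ℝ^(n+2) a differentiable closed conformal field with conformal factor φ : U → ℝ. Assume: (i) η(Z p, Z p) ≠ 0 for all p ∈ U and there is ε ∈ {-1, 1} with ε * η(Z p, Z p) > 0 for all p ∈ U; (ii) at every p ∈ U both A*_ξ(p) and A_N(p) are symmetric on screen vectors; (iii) (constant angle) for every p ∈ U and every screen vector v at p, the functions q ↦ η(Z q, ξ q)/√(ε * η(Z q, Z q)) and q ↦ η(Z q, N q)/√(ε * η(Z q, Z q)) have vanishing derivative at p in the direction v. Then for every p ∈ U the screen part Z*(p) is a principal direction of A_{Z⊥}(p): A_{Z⊥}(p)(Z*(p)) = -2 * ε * (η(Z p, ξ p)/√(ε * η(Z p, Z p))) * (η(Z p, N p)/√(ε * η(Z p, Z p))) * φ(p) • Z*(p). (Flat-Minkowski-ambient form of the paper's theorem that a screen integrable constant angle null hypersurface with respect to a closed conformal field has a canonical principal direction, with the explicit eigenvalue.) -/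

import Mathlib

open scoped BigOperators

noncomputable section

/-- Euclidean space `ℝ^m`. -/
abbrev E (m : ℕ) : Type := EuclideanSpace ℝ (Fin m)

/-- The Minkowski bilinear form `η(x,y) = -(x 0)(y 0) + ∑_{i≥1} (x i)(y i)` on `ℝ^(n+2)`. -/
def eta {n : ℕ} (x y : E (n + 2)) : ℝ :=
  (∑ i, x i * y i) - 2 * (x 0 * y 0)

/-- Screen projection `P_p(w) = w - η(w,N)ξ - η(w,ξ)N` determined by the null frame at a point. -/
def sproj {n : ℕ} (xi N w : E (n + 2)) : E (n + 2) :=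
  w - eta w N • xi - eta w xi • N

/-- Screen shape operator `A*_ξ(p)(v) = -P_p(D_v ξ (p))`. -/
def Astar {n : ℕ} (xi N : E (n + 2) → E (n + 2)) (p v : E (n + 2)) : E (n + 2) :=
  -sproj (xi p) (N p) (fderiv ℝ xi p v)

/-- Shape operator `A_N(p)(v) = -P_p(D_v N (p))`. -/
def AN {n : ℕ} (xi N : E (n + 2) → E (n + 2)) (p v : E (n + 2)) : E (n + 2) :=
  -sproj (xi p) (N p) (fderiv ℝ N p v)

/-- Transversal one-form `τ_p(v) = η(D_v N(p), ξ p)`. -/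
def tau {n : ℕ} (xi N : E (n + 2) → E (n + 2)) (p v : E (n + 2)) : ℝ :=
  eta (fderiv ℝ N p v) (xi p)

/-- Screen part `Z*(p) = P_p(Z p)` of a vector field. -/
def Zstar {n : ℕ} (xi N Z : E (n + 2) → E (n + 2)) (p : E (n + 2)) : E (n + 2) :=
  sproj (xi p) (N p) (Z p)

/-- `A_{Z⊥}(p)(v) = η(Z p, N p) • A*_ξ(p)(v) + η(Z p, ξ p) • A_N(p)(v)`. -/
def AZperp {n : ℕ} (xi N Z : E (n + 2) → E (n + 2)) (p v : E (n + 2)) : E (n + 2) :=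
  eta (Z p) (N p) • Astar xi N p v + eta (Z p) (xi p) • AN xi N p v

/-!
Fix `p` and a screen vector `v`, and write `a = η(Z, ξ)`, `b = η(Z, N)`, `c = η(Z, Z)`.
Since `Z` is closed conformal, `D_v √(ε c) = ε φ η(Z, v) / √(ε c)`, so the constant angle
conditions give `η(Z, D_v ξ) = a φ η(Z, v) / c` and `η(Z, D_v N) = b φ η(Z, v) / c`.
Symmetry of `A*_ξ` and `A_N` on the screen gives
`η(A_{Z⊥} Z*, v) = b η(Z, A*_ξ v) + a η(Z, A_N v)`; differentiating the null frame relations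
shows that the `τ`-terms of `A*_ξ` and `A_N` cancel in this sum, which leaves
`-(b η(Z, D_v ξ) + a η(Z, D_v N)) = -2 a b φ η(Z*, v) / c`. Both sides of the claim lie in the
screen, and a screen vector `η`-orthogonal to the whole screen vanishes, so this identity for
all screen `v` is the claim.
-/

open Filter Topology

section Minkowski

variable {n : ℕ}

def etaL (n : ℕ) : E (n + 2) →L[ℝ] E (n + 2) →L[ℝ] ℝ :=
  innerSL ℝ - (2 : ℝ) • (EuclideanSpace.proj 0).smulRight (EuclideanSpace.proj 0)

@[simp]
lemma etaL_apply (x y : E (n + 2)) : etaL n x y = eta x y := by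
  rw [etaL, sub_apply, sub_apply, innerSL_apply_apply]
  simp [eta, PiLp.inner_apply, mul_comm]

lemma eta_comm (x y : E (n + 2)) : eta x y = eta y x := by
  simp [eta, mul_comm]

lemma eta_add_left (x y z : E (n + 2)) : eta (x + y) z = eta x z + eta y z := by
  simp [← etaL_apply]

lemma eta_sub_left (x y z : E (n + 2)) : eta (x - y) z = eta x z - eta y z := by
  simp [← etaL_apply]

lemma eta_smul_left (c : ℝ) (x z : E (n + 2)) : eta (c • x) z = c * eta x z := by
  simp [← etaL_apply]

lemma eta_neg_right (x z : E (n + 2)) : eta x (-z) = -eta x z := by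
  simp [← etaL_apply]

lemma eta_sub_right (x y z : E (n + 2)) : eta x (y - z) = eta x y - eta x z := by
  simp [← etaL_apply]

lemma eta_smul_right (c : ℝ) (x z : E (n + 2)) : eta x (c • z) = c * eta x z := by
  simp [← etaL_apply]

lemma eq_zero_of_forall_eta_eq_zero {w : E (n + 2)} (h : ∀ u, eta w u = 0) : w = 0 := by
  ext i
  have hi := h (EuclideanSpace.single i 1)
  by_cases hi0 : i = 0
  · subst hi0
    simp only [eta, PiLp.single_apply, mul_ite, mul_one, mul_zero, Finset.sum_ite_eq',
      Finset.mem_univ, ↓reduceIte] at hi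
    rw [PiLp.zero_apply]
    linarith
  · simpa [eta, Ne.symm hi0] using hi

end Minkowski

section Screen

variable {n : ℕ}

def screen (xi N : E (n + 2)) : Submodule ℝ (E (n + 2)) where
  carrier := {v | eta v xi = 0 ∧ eta v N = 0}
  add_mem' hv hw := by constructor <;> simp [eta_add_left, hv.1, hv.2, hw.1, hw.2]
  zero_mem' := by constructor <;> simp [← etaL_apply]
  smul_mem' c _ hv := by constructor <;> simp [eta_smul_left, hv.1, hv.2]

lemma eta_sproj_right (w xi N u : E (n + 2)) :
    eta w (sproj xi N u) = eta w u - eta u N * eta w xi - eta u xi * eta w N := by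
  rw [sproj, eta_sub_right, eta_sub_right, eta_smul_right, eta_smul_right]

lemma eta_sproj_right_of_mem_screen {xi N w : E (n + 2)} (hw : w ∈ screen xi N)
    (u : E (n + 2)) : eta w (sproj xi N u) = eta w u := by
  rw [eta_sproj_right, hw.1, hw.2]
  ring

lemma eta_sproj_left_of_mem_screen {xi N v : E (n + 2)} (hv : v ∈ screen xi N)
    (u : E (n + 2)) : eta (sproj xi N u) v = eta u v := by
  rw [eta_comm, eta_sproj_right_of_mem_screen hv, eta_comm]

variable {xi N : E (n + 2)}

lemma sproj_mem_screen (hxx : eta xi xi = 0) (hNN : eta N N = 0) (hxN : eta xi N = 1)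
    (u : E (n + 2)) : sproj xi N u ∈ screen xi N := by
  have hNx : eta N xi = 1 := by rw [eta_comm, hxN]
  constructor <;> simp [sproj, eta_sub_left, eta_smul_left, hxx, hNN, hxN, hNx]

lemma eq_of_mem_screen_of_forall_eta_eq (hxx : eta xi xi = 0) (hNN : eta N N = 0)
    (hxN : eta xi N = 1) {x y : E (n + 2)} (hx : x ∈ screen xi N) (hy : y ∈ screen xi N)
    (h : ∀ v ∈ screen xi N, eta x v = eta y v) : x = y := by
  have hxy := (screen xi N).sub_mem hx hy
  refine sub_eq_zero.1 (eq_zero_of_forall_eta_eq_zero fun u => ?_)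
  rw [← eta_sproj_right_of_mem_screen hxy, eta_sub_left,
    h _ (sproj_mem_screen hxx hNN hxN u), sub_self]

end Screen

section Calculus

variable {n : ℕ} {f g : E (n + 2) → E (n + 2)} {p : E (n + 2)}

lemma fderiv_eta_apply (hf : DifferentiableAt ℝ f p) (hg : DifferentiableAt ℝ g p)
    (v : E (n + 2)) :
    fderiv ℝ (fun q => eta (f q) (g q)) p v =
      eta (f p) (fderiv ℝ g p v) + eta (fderiv ℝ f p v) (g p) := by
  simp_rw [← etaL_apply]
  rw [((etaL n).hasFDerivAt_of_bilinear hf.hasFDerivAt hg.hasFDerivAt).fderiv]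
  simp

lemma DifferentiableAt.eta (hf : DifferentiableAt ℝ f p) (hg : DifferentiableAt ℝ g p) :
    DifferentiableAt ℝ (fun q => eta (f q) (g q)) p := by
  simp_rw [← etaL_apply]
  exact ((etaL n).hasFDerivAt_of_bilinear hf.hasFDerivAt hg.hasFDerivAt).differentiableAt

lemma eta_fderiv_add_eta_fderiv_eq_zero (hf : DifferentiableAt ℝ f p)
    (hg : DifferentiableAt ℝ g p) {k : ℝ}
    (hk : (fun q => eta (f q) (g q)) =ᶠ[𝓝 p] fun _ => k)
    (v : E (n + 2)) : eta (f p) (fderiv ℝ g p v) + eta (fderiv ℝ f p v) (g p) = 0 := by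
  rw [← fderiv_eta_apply hf hg, hk.fderiv_eq, fderiv_const_apply, zero_apply]

end Calculus

section NullFrame

variable {n : ℕ}

structure IsNullFrameOn (ξ N : E (n + 2) → E (n + 2)) (U : Set (E (n + 2))) : Prop where
  differentiableAt_xi : ∀ p ∈ U, DifferentiableAt ℝ ξ p
  differentiableAt_N : ∀ p ∈ U, DifferentiableAt ℝ N p
  eta_xi_xi : ∀ p ∈ U, eta (ξ p) (ξ p) = 0
  eta_N_N : ∀ p ∈ U, eta (N p) (N p) = 0
  eta_xi_N : ∀ p ∈ U, eta (ξ p) (N p) = 1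

namespace IsNullFrameOn

variable {ξ N : E (n + 2) → E (n + 2)} {U : Set (E (n + 2))} {p : E (n + 2)}

lemma sproj_mem_screen (hF : IsNullFrameOn ξ N U) (hp : p ∈ U) (u : E (n + 2)) :
    sproj (ξ p) (N p) u ∈ screen (ξ p) (N p) :=
  _root_.sproj_mem_screen (hF.eta_xi_xi p hp) (hF.eta_N_N p hp) (hF.eta_xi_N p hp) u

lemma Astar_mem_screen (hF : IsNullFrameOn ξ N U) (hp : p ∈ U) (v : E (n + 2)) :
    Astar ξ N p v ∈ screen (ξ p) (N p) :=
  neg_mem (hF.sproj_mem_screen hp _)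

lemma AN_mem_screen (hF : IsNullFrameOn ξ N U) (hp : p ∈ U) (v : E (n + 2)) :
    AN ξ N p v ∈ screen (ξ p) (N p) :=
  neg_mem (hF.sproj_mem_screen hp _)

lemma Zstar_mem_screen (hF : IsNullFrameOn ξ N U) (hp : p ∈ U) (Z : E (n + 2) → E (n + 2)) :
    Zstar ξ N Z p ∈ screen (ξ p) (N p) :=
  hF.sproj_mem_screen hp _

lemma AZperp_mem_screen (hF : IsNullFrameOn ξ N U) (hp : p ∈ U) (Z : E (n + 2) → E (n + 2))
    (v : E (n + 2)) : AZperp ξ N Z p v ∈ screen (ξ p) (N p) :=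
  add_mem (Submodule.smul_mem _ _ (hF.Astar_mem_screen hp v))
    (Submodule.smul_mem _ _ (hF.AN_mem_screen hp v))

lemma eta_fderiv_xi_xi (hF : IsNullFrameOn ξ N U) (hU : U ∈ 𝓝 p) (v : E (n + 2)) :
    eta (fderiv ℝ ξ p v) (ξ p) = 0 := by
  have hξ := hF.differentiableAt_xi p (mem_of_mem_nhds hU)
  have h := eta_fderiv_add_eta_fderiv_eq_zero hξ hξ (eventuallyEq_of_mem hU hF.eta_xi_xi) v
  rw [eta_comm (ξ p)] at h
  linarith

lemma eta_fderiv_N_N (hF : IsNullFrameOn ξ N U) (hU : U ∈ 𝓝 p) (v : E (n + 2)) :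
    eta (fderiv ℝ N p v) (N p) = 0 := by
  have hN := hF.differentiableAt_N p (mem_of_mem_nhds hU)
  have h := eta_fderiv_add_eta_fderiv_eq_zero hN hN (eventuallyEq_of_mem hU hF.eta_N_N) v
  rw [eta_comm (N p)] at h
  linarith

lemma eta_fderiv_xi_N (hF : IsNullFrameOn ξ N U) (hU : U ∈ 𝓝 p) (v : E (n + 2)) :
    eta (fderiv ℝ ξ p v) (N p) = -tau ξ N p v := by
  have hp := mem_of_mem_nhds hU
  have h := eta_fderiv_add_eta_fderiv_eq_zero (hF.differentiableAt_xi p hp)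
    (hF.differentiableAt_N p hp) (eventuallyEq_of_mem hU hF.eta_xi_N) v
  rw [eta_comm (ξ p), ← tau] at h
  linarith

lemma eta_Astar_right (hF : IsNullFrameOn ξ N U) (hU : U ∈ 𝓝 p) (w v : E (n + 2)) :
    eta w (Astar ξ N p v) = -eta w (fderiv ℝ ξ p v) - tau ξ N p v * eta w (ξ p) := by
  rw [Astar, eta_neg_right, eta_sproj_right, hF.eta_fderiv_xi_N hU, hF.eta_fderiv_xi_xi hU]
  ring

lemma eta_AN_right (hF : IsNullFrameOn ξ N U) (hU : U ∈ 𝓝 p) (w v : E (n + 2)) :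
    eta w (AN ξ N p v) = -eta w (fderiv ℝ N p v) + tau ξ N p v * eta w (N p) := by
  rw [AN, eta_neg_right, eta_sproj_right, hF.eta_fderiv_N_N hU, ← tau]
  ring

lemma eta_AZperp_Zstar (hF : IsNullFrameOn ξ N U) (hU : U ∈ 𝓝 p) (Z : E (n + 2) → E (n + 2))
    (hA : ∀ v ∈ screen (ξ p) (N p), ∀ w ∈ screen (ξ p) (N p),
      eta (Astar ξ N p v) w = eta v (Astar ξ N p w))
    (hAN : ∀ v ∈ screen (ξ p) (N p), ∀ w ∈ screen (ξ p) (N p),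
      eta (AN ξ N p v) w = eta v (AN ξ N p w))
    {v : E (n + 2)} (hv : v ∈ screen (ξ p) (N p)) :
    eta (AZperp ξ N Z p (Zstar ξ N Z p)) v =
      -(eta (Z p) (N p) * eta (Z p) (fderiv ℝ ξ p v) +
        eta (Z p) (ξ p) * eta (Z p) (fderiv ℝ N p v)) := by
  have hp := mem_of_mem_nhds hU
  have hZ := hF.Zstar_mem_screen hp Z
  calc eta (AZperp ξ N Z p (Zstar ξ N Z p)) v
      = eta (Z p) (N p) * eta (Zstar ξ N Z p) (Astar ξ N p v) +
          eta (Z p) (ξ p) * eta (Zstar ξ N Z p) (AN ξ N p v) := by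
        rw [AZperp, eta_add_left, eta_smul_left, eta_smul_left, hA _ hZ _ hv, hAN _ hZ _ hv]
    _ = eta (Z p) (N p) * eta (Z p) (Astar ξ N p v) +
          eta (Z p) (ξ p) * eta (Z p) (AN ξ N p v) := by
        rw [Zstar, eta_sproj_left_of_mem_screen (hF.Astar_mem_screen hp v),
          eta_sproj_left_of_mem_screen (hF.AN_mem_screen hp v)]
    _ = _ := by
        rw [hF.eta_Astar_right hU, hF.eta_AN_right hU]
        ring

end IsNullFrameOn

end NullFrame

lemma fderiv_apply_eq_div_mul_of_fderiv_div_apply_eq_zero {F : Type*} [NormedAddCommGroup F]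
    [NormedSpace ℝ F] {f ρ : F → ℝ} {p v : F} (hf : DifferentiableAt ℝ f p)
    (hρ : DifferentiableAt ℝ ρ p) (hρp : ρ p ≠ 0)
    (h : fderiv ℝ (fun q => f q / ρ q) p v = 0) :
    fderiv ℝ f p v = f p / ρ p * fderiv ℝ ρ p v := by
  have hfρ : f =ᶠ[𝓝 p] fun q => f q / ρ q * ρ q :=
    (hρ.continuousAt.eventually_ne hρp).mono fun q hq => (div_mul_cancel₀ _ hq).symm
  have hdiv : DifferentiableAt ℝ (fun q => f q / ρ q) p := by
    simp_rw [div_eq_mul_inv]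
    exact hf.fun_mul (hρ.fun_inv hρp)
  rw [hfρ.fderiv_eq, fderiv_fun_mul hdiv hρ]
  simp [h]

section ClosedConformal

variable {n : ℕ} {Z W : E (n + 2) → E (n + 2)} {φ : E (n + 2) → ℝ} {p : E (n + 2)}

lemma fderiv_eta_apply_of_fderiv_eq_smul_id (hZ : DifferentiableAt ℝ Z p)
    (hW : DifferentiableAt ℝ W p) (hCC : fderiv ℝ Z p = φ p • ContinuousLinearMap.id ℝ _)
    (v : E (n + 2)) :
    fderiv ℝ (fun q => eta (Z q) (W q)) p v =
      eta (Z p) (fderiv ℝ W p v) + φ p * eta v (W p) := by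
  rw [fderiv_eta_apply hZ hW, hCC]
  simp [eta_smul_left]

lemma fderiv_sqrt_eta_self_apply (hZ : DifferentiableAt ℝ Z p)
    (hCC : fderiv ℝ Z p = φ p • ContinuousLinearMap.id ℝ _) {ε : ℝ}
    (hε : 0 < ε * eta (Z p) (Z p)) (v : E (n + 2)) :
    fderiv ℝ (fun q => √(ε * eta (Z q) (Z q))) p v =
      ε * φ p * eta (Z p) v / √(ε * eta (Z p) (Z p)) := by
  rw [fderiv_sqrt ((hZ.eta hZ).const_mul ε) hε.ne', fderiv_const_mul (hZ.eta hZ)]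
  simp only [smul_apply, smul_eq_mul]
  rw [fderiv_eta_apply hZ hZ, hCC]
  simp only [smul_apply, ContinuousLinearMap.id_apply, eta_smul_right, eta_smul_left, eta_comm v]
  field_simp
  ring

lemma eta_fderiv_of_constant_angle (hZ : DifferentiableAt ℝ Z p) (hW : DifferentiableAt ℝ W p)
    (hCC : fderiv ℝ Z p = φ p • ContinuousLinearMap.id ℝ _) {ε : ℝ}
    (hε : 0 < ε * eta (Z p) (Z p)) {v : E (n + 2)} (hv : eta v (W p) = 0)
    (hangle : fderiv ℝ (fun q => eta (Z q) (W q) / √(ε * eta (Z q) (Z q))) p v = 0) :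
    eta (Z p) (fderiv ℝ W p v) = eta (Z p) (W p) / eta (Z p) (Z p) * φ p * eta (Z p) v := by
  have hρ := ((hZ.eta hZ).const_mul ε).sqrt hε.ne'
  have h := fderiv_apply_eq_div_mul_of_fderiv_div_apply_eq_zero (hZ.eta hW) hρ
    (Real.sqrt_ne_zero'.2 hε) hangle
  rw [fderiv_eta_apply_of_fderiv_eq_smul_id hZ hW hCC, hv, mul_zero, add_zero,
    fderiv_sqrt_eta_self_apply hZ hCC hε] at h
  have hc : eta (Z p) (Z p) ≠ 0 := right_ne_zero_of_mul hε.ne'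
  have hε0 : ε ≠ 0 := left_ne_zero_of_mul hε.ne'
  rw [h, div_mul_div_comm, ← sq, Real.sq_sqrt hε.le]
  field_simp

end ClosedConformal

theorem constant_angle_canonical_principal_direction {n : ℕ}
    (U : Set (E (n + 2))) (hU : IsOpen U)
    (ξ N Z : E (n + 2) → E (n + 2)) (φ : E (n + 2) → ℝ) (ε : ℝ)
    (hξd : ∀ p ∈ U, DifferentiableAt ℝ ξ p)
    (hNd : ∀ p ∈ U, DifferentiableAt ℝ N p)
    (hZd : ∀ p ∈ U, DifferentiableAt ℝ Z p)
    (hξξ : ∀ p ∈ U, eta (ξ p) (ξ p) = 0)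
    (hNN : ∀ p ∈ U, eta (N p) (N p) = 0)
    (hξN : ∀ p ∈ U, eta (ξ p) (N p) = 1)
    (hCC : ∀ p ∈ U, fderiv ℝ Z p = φ p • ContinuousLinearMap.id ℝ (E (n + 2)))
    (hεZ : ∀ p ∈ U, 0 < ε * eta (Z p) (Z p))
    (hAsym : ∀ p ∈ U, ∀ v w : E (n + 2),
      eta v (ξ p) = 0 → eta v (N p) = 0 → eta w (ξ p) = 0 → eta w (N p) = 0 →
      eta (Astar ξ N p v) w = eta v (Astar ξ N p w))
    (hANsym : ∀ p ∈ U, ∀ v w : E (n + 2),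
      eta v (ξ p) = 0 → eta v (N p) = 0 → eta w (ξ p) = 0 → eta w (N p) = 0 →
      eta (AN ξ N p v) w = eta v (AN ξ N p w))
    (hangξ : ∀ p ∈ U, ∀ v : E (n + 2), eta v (ξ p) = 0 → eta v (N p) = 0 →
      fderiv ℝ (fun q => eta (Z q) (ξ q) / Real.sqrt (ε * eta (Z q) (Z q))) p v = 0)
    (hangN : ∀ p ∈ U, ∀ v : E (n + 2), eta v (ξ p) = 0 → eta v (N p) = 0 →
      fderiv ℝ (fun q => eta (Z q) (N q) / Real.sqrt (ε * eta (Z q) (Z q))) p v = 0) :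
    ∀ p ∈ U, AZperp ξ N Z p (Zstar ξ N Z p) =
      (-2 * ε * (eta (Z p) (ξ p) / Real.sqrt (ε * eta (Z p) (Z p))) *
        (eta (Z p) (N p) / Real.sqrt (ε * eta (Z p) (Z p))) * φ p) • Zstar ξ N Z p := by
  intro p hp
  have hF : IsNullFrameOn ξ N U := ⟨hξd, hNd, hξξ, hNN, hξN⟩
  have hεc := hεZ p hp
  refine eq_of_mem_screen_of_forall_eta_eq (hξξ p hp) (hNN p hp) (hξN p hp)
    (hF.AZperp_mem_screen hp Z _) (Submodule.smul_mem _ _ (hF.Zstar_mem_screen hp Z))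
    fun v hv => ?_
  rw [hF.eta_AZperp_Zstar (hU.mem_nhds hp) Z
      (fun v hv w hw => hAsym p hp v w hv.1 hv.2 hw.1 hw.2)
      (fun v hv w hw => hANsym p hp v w hv.1 hv.2 hw.1 hw.2) hv,
    eta_fderiv_of_constant_angle (hZd p hp) (hξd p hp) (hCC p hp) hεc hv.1
      (hangξ p hp v hv.1 hv.2),
    eta_fderiv_of_constant_angle (hZd p hp) (hNd p hp) (hCC p hp) hεc hv.2
      (hangN p hp v hv.1 hv.2),
    eta_smul_left, Zstar, eta_sproj_left_of_mem_screen hv]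
  have hc : eta (Z p) (Z p) ≠ 0 := right_ne_zero_of_mul hεc.ne'
  have hρ0 : √(ε * eta (Z p) (Z p)) ≠ 0 := Real.sqrt_ne_zero'.2 hεc
  have hρ := Real.sq_sqrt hεc.le
  generalize √(ε * eta (Z p) (Z p)) = ρ at hρ hρ0 ⊢
  field_simp
  rw [hρ]
  ring

end
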